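/- Let Y ⊆ A⁺ be a code, y ∈ Y, and define Y₀ = (Y \ {y})·{y}*. Then Y₀ is a code, and Y₀* ⊊ Y* (the containment is strict since y ∈ Y* \ Y₀*). Moreover, if θ is a bijective literal (anti)morphism and Yᵢ = θⁱ(Y₀) for i ∈ ℤ, then each Yᵢ is a code and M = ⋂_{i∈ℤ} Yᵢ* is a free submonoid satisfying θ(M) = M. -/

import Mathlib

open List

variable {α : Type*}

/-- The submonoid (as a set) generated by `X`: all concatenations of words of `X`. -/
def StarSet (X : Set (List α)) : Set (List α) :=
  {w | ∃ l : List (List α), (∀ u ∈ l, u ∈ X) ∧ l.flatten = w}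

/-- `X` is a (variable-length) code: unique factorization over `X`. -/
def IsCode (X : Set (List α)) : Prop :=
  ∀ l m : List (List α), (∀ u ∈ l, u ∈ X) → (∀ u ∈ m, u ∈ X) →
    l.flatten = m.flatten → l = m

def Factor (u w : List α) : Prop := ∃ p s, p ++ u ++ s = w

def Factors (S : Set (List α)) : Set (List α) := {u | ∃ w ∈ S, Factor u w}

def Complete (X : Set (List α)) : Prop := Factors (StarSet X) = Set.univ

def Thin (X : Set (List α)) : Prop := Factors X ≠ Set.univ

def Invariant (θ : List α → List α) (X : Set (List α)) : Prop := θ '' X = X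

def IsSubmonoidSet (M : Set (List α)) : Prop :=
  [] ∈ M ∧ ∀ u ∈ M, ∀ v ∈ M, u ++ v ∈ M

/-- Stability (equidivisibility) condition, characterizing free submonoids of `A*`. -/
def Stable (M : Set (List α)) : Prop :=
  ∀ u v w, u ∈ M → u ++ v ∈ M → w ∈ M → v ++ w ∈ M → v ∈ M

def FreeSubmonoid (M : Set (List α)) : Prop := IsSubmonoidSet M ∧ Stable M

/-- Minimal generating set of a submonoid: `(M \ {ε}) \ (M \ {ε})²`. -/
def MinGen (M : Set (List α)) : Set (List α) :=
  {w | w ∈ M ∧ w ≠ [] ∧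
    ¬ ∃ u v, u ∈ M ∧ v ∈ M ∧ u ≠ [] ∧ v ≠ [] ∧ u ++ v = w}

def IsMorphism (θ : List α → List α) : Prop :=
  ∀ u v, θ (u ++ v) = θ u ++ θ v

def IsAntimorphism (θ : List α → List α) : Prop :=
  θ [] = [] ∧ ∀ u v, θ (u ++ v) = θ v ++ θ u

/-- `θ` is literal: the image of a letter is a letter. -/
def Literal (θ : List α → List α) : Prop := ∀ a : α, ∃ b : α, θ [a] = [b]

/-- `θ` is a bijective literal (anti)morphism of the free monoid. -/
def LitAnti (θ : List α → List α) : Prop :=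
  Function.Bijective θ ∧ Literal θ ∧ (IsMorphism θ ∨ IsAntimorphism θ)

/-- The set `{θ^i z : i ∈ ℤ}` for a bijective `θ` (negative powers are
captured by `θ^[i] w = z`). -/
def OrbitZ (θ : List α → List α) (z : List α) : Set (List α) :=
  {w | ∃ i : ℕ, θ^[i] z = w ∨ θ^[i] w = z}

def IsPrefixCode (X : Set (List α)) : Prop :=
  [] ∉ X ∧ ∀ x ∈ X, ∀ u, x ++ u ∈ X → u = []

def IsSuffixCode (X : Set (List α)) : Prop :=
  [] ∉ X ∧ ∀ x ∈ X, ∀ u, u ++ x ∈ X → u = []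

/-- `X^k`: products of exactly `k` words of `X`. -/
def PowSet (X : Set (List α)) (k : ℕ) : Set (List α) :=
  {w | ∃ l : List (List α), l.length = k ∧ (∀ u ∈ l, u ∈ X) ∧ l.flatten = w}

/-- Circular code: `x₁⋯xₘ = s·y₂⋯yₙ·p` with `y₁ = ps ∈ X`, `s ≠ ε`
forces `m = n`, `p = ε` and `xᵢ = yᵢ`. -/
def IsCircularCode (X : Set (List α)) : Prop :=
  ∀ (l ys : List (List α)) (p s : List α),
    (∀ u ∈ l, u ∈ X) → p ++ s ∈ X → (∀ u ∈ ys, u ∈ X) → s ≠ [] →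
    l.flatten = s ++ ys.flatten ++ p → l = (p ++ s) :: ys ∧ p = []

/-- A word is overlapping-free if no proper nonempty prefix equals a suffix. -/
def OverlapFree (w : List α) : Prop :=
  ¬ ∃ u v : List α, u ≠ [] ∧ u.length ≤ w.length - 1 ∧ u ++ w = w ++ v

/-- `X` is a regular (rational) language: accepted by a finite automaton. -/
def IsRegularSet (X : Set (List α)) : Prop :=
  ∃ (σ : Type) (_ : Fintype σ) (M : DFA α σ), M.accepts = X

/-!
Every word of `Y₀ = (Y \ {y}) y*` factors over `Y` as a word of `Y \ {y}` followed by copies of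
`y`, so a factorization over `Y₀` is recovered from the corresponding factorization over `Y` by
cutting in front of each factor different from `y`; this makes `Y₀` a code, and `y ∉ Y₀*`.
A bijective morphism or antimorphism `θ` maps `X*` onto `(θ X)*` and preserves and reflects being
a code, so every `Yᵢ` is a code, and the family `(Yᵢ)` is permuted by `θ`, which therefore fixes
the intersection `M` of the free submonoids `Yᵢ*`.
-/

open Function

theorem isSubmonoidSet_starSet (X : Set (List α)) : IsSubmonoidSet (StarSet X) := by
  refine ⟨⟨[], by simp, rfl⟩, ?_⟩
  rintro _ ⟨l, hl, rfl⟩ _ ⟨m, hm, rfl⟩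
  exact ⟨l ++ m, by simpa [or_imp, forall_and] using And.intro hl hm, List.flatten_append⟩

theorem stable_starSet {X : Set (List α)} (hX : IsCode X) : Stable (StarSet X) := by
  rintro _ v _ ⟨l, hl, rfl⟩ ⟨m, hm, hmv⟩ ⟨n, hn, rfl⟩ ⟨p, hp, hvp⟩
  have hmn : m ++ n = l ++ p :=
    hX _ _ (by simpa [or_imp, forall_and] using And.intro hm hn)
      (by simpa [or_imp, forall_and] using And.intro hl hp) (by simp [hmv, hvp])
  rcases List.append_eq_append_iff.mp hmn with ⟨a, rfl, -⟩ | ⟨c, rfl, -⟩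
  · have hlen := congrArg List.length hmv
    simp only [List.flatten_append, List.length_append] at hlen
    exact ⟨[], by simp, (List.eq_nil_of_length_eq_zero (by omega)).symm⟩
  · rw [List.flatten_append, List.append_cancel_left_eq] at hmv
    exact ⟨c, fun u hu => hm u (List.mem_append_right l hu), hmv⟩

theorem freeSubmonoid_biInter {ι : Type*} {s : Set ι} {M : ι → Set (List α)}
    (h : ∀ i ∈ s, FreeSubmonoid (M i)) : FreeSubmonoid (⋂ i ∈ s, M i) := by
  simp only [FreeSubmonoid, IsSubmonoidSet, Stable, Set.mem_iInter₂] at h ⊢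
  exact ⟨⟨fun i hi => (h i hi).1.1, fun u hu v hv i hi => (h i hi).1.2 u (hu i hi) v (hv i hi)⟩,
    fun u v w hu huv hw hvw i hi => (h i hi).2 u v w (hu i hi) (huv i hi) (hw i hi) (hvw i hi)⟩

section Morphisms

variable {φ : List α → List α}

theorem IsMorphism.map_nil (h : IsMorphism φ) : φ [] = [] := by
  simpa using congrArg List.length (h [] [])

theorem IsMorphism.map_flatten (h : IsMorphism φ) (l : List (List α)) :
    φ l.flatten = (l.map φ).flatten := by
  induction l with
  | nil => simpa using h.map_nil
  | cons u l ih => simp [h u, ih]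

theorem IsAntimorphism.map_flatten (h : IsAntimorphism φ) (l : List (List α)) :
    φ l.flatten = (l.reverse.map φ).flatten := by
  induction l with
  | nil => simpa using h.1
  | cons u l ih => simp [h.2 u, ih]

/-- `σ` is the identity for a morphism and reversal for an antimorphism. -/
theorem exists_involutive_map_flatten_eq (hφ : IsMorphism φ ∨ IsAntimorphism φ) :
    ∃ σ : List (List α) → List (List α), Involutive σ ∧ (∀ l u, u ∈ σ l ↔ u ∈ l) ∧
      ∀ l, φ (σ l).flatten = (l.map φ).flatten := by
  rcases hφ with hφ | hφ
  · exact ⟨id, fun _ => rfl, fun _ _ => Iff.rfl, hφ.map_flatten⟩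
  · refine ⟨List.reverse, List.reverse_reverse, fun _ _ => List.mem_reverse, fun l => ?_⟩
    rw [hφ.map_flatten, List.reverse_reverse]

theorem exists_list_map_eq_of_forall_mem_image {β γ : Type*} {f : β → γ} {s : Set β}
    {l : List γ} (h : ∀ u ∈ l, u ∈ f '' s) : ∃ l₀ : List β, (∀ a ∈ l₀, a ∈ s) ∧ l₀.map f = l := by
  induction l with
  | nil => exact ⟨[], by simp, rfl⟩
  | cons u l ih =>
    obtain ⟨l₀, hl₀, rfl⟩ := ih fun v hv => h v (List.mem_cons_of_mem u hv)
    obtain ⟨a, ha, rfl⟩ := h u List.mem_cons_self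
    exact ⟨a :: l₀, by simpa [ha] using hl₀, rfl⟩

theorem image_starSet (hφ : IsMorphism φ ∨ IsAntimorphism φ) (X : Set (List α)) :
    φ '' StarSet X = StarSet (φ '' X) := by
  obtain ⟨σ, hσ, hmem, hflat⟩ := exists_involutive_map_flatten_eq hφ
  ext w
  constructor
  · rintro ⟨_, ⟨l, hl, rfl⟩, rfl⟩
    refine ⟨(σ l).map φ, ?_, by rw [← hflat, hσ]⟩
    simpa using fun u hu => Set.mem_image_of_mem φ (hl u ((hmem l u).1 hu))
  · rintro ⟨L, hL, rfl⟩
    obtain ⟨l, hl, rfl⟩ := exists_list_map_eq_of_forall_mem_image hL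
    exact ⟨(σ l).flatten, ⟨σ l, fun u hu => hl u ((hmem l u).1 hu), rfl⟩, hflat l⟩

theorem isCode_image_iff (hinj : Injective φ) (hφ : IsMorphism φ ∨ IsAntimorphism φ)
    (X : Set (List α)) : IsCode (φ '' X) ↔ IsCode X := by
  obtain ⟨σ, hσ, hmem, hflat⟩ := exists_involutive_map_flatten_eq hφ
  have hover : ∀ {l : List (List α)}, (∀ u ∈ l, u ∈ X) → ∀ u ∈ σ l, u ∈ X :=
    fun hl u hu => hl u ((hmem _ u).1 hu)
  constructor
  · intro hX l m hl hm hlm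
    have hmap : (σ l).map φ = (σ m).map φ := by
      refine hX _ _ ?_ ?_ (by rw [← hflat, ← hflat, hσ, hσ, hlm]) <;>
        simpa using fun u hu => Set.mem_image_of_mem φ (hover ‹_› u hu)
    exact hσ.injective (List.map_injective_iff.2 hinj hmap)
  · intro hX L M hL hM hLM
    obtain ⟨l, hl, rfl⟩ := exists_list_map_eq_of_forall_mem_image hL
    obtain ⟨m, hm, rfl⟩ := exists_list_map_eq_of_forall_mem_image hM
    rw [← hflat, ← hflat] at hLM
    rw [hσ.injective (hX _ _ (hover hl) (hover hm) (hinj hLM))]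

theorem image_biInter_starSet (hbij : Bijective φ) (hφ : IsMorphism φ ∨ IsAntimorphism φ)
    {F : Set (Set (List α))} (hF : Set.image φ '' F = F) :
    φ '' ⋂ S ∈ F, StarSet S = ⋂ S ∈ F, StarSet S := by
  conv_rhs => rw [← hF]
  rw [Set.image_iInter₂ hbij, Set.biInter_image]
  simp only [image_starSet hφ]

end Morphisms

section Orbits

variable {β : Type*} {f : β → β}

/-- The orbit `{f^i z : i ∈ ℤ}` of `z` under a bijection `f`, negative powers being written as
`f^[i] w = z`. -/
def iterateOrbit (f : β → β) (z : β) : Set β := {w | ∃ i : ℕ, f^[i] z = w ∨ f^[i] w = z}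

theorem image_iterateOrbit (hf : Bijective f) (z : β) :
    f '' iterateOrbit f z = iterateOrbit f z := by
  ext w
  constructor
  · rintro ⟨v, ⟨i, rfl | rfl⟩, rfl⟩
    · exact ⟨i + 1, Or.inl (iterate_succ_apply' f i z)⟩
    · cases i with
      | zero => exact ⟨1, Or.inl rfl⟩
      | succ i => exact ⟨i, Or.inr (iterate_succ_apply f i v).symm⟩
  · obtain ⟨v, rfl⟩ := hf.2 w
    rintro ⟨i, h | rfl⟩
    · refine ⟨v, ?_, rfl⟩
      cases i with
      | zero => exact ⟨1, Or.inr h.symm⟩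
      | succ i => exact ⟨i, Or.inl (hf.1 ((iterate_succ_apply' f i z).symm.trans h))⟩
    · exact ⟨v, ⟨i + 1, Or.inr (iterate_succ_apply f i v)⟩, rfl⟩

theorem iff_of_mem_iterateOrbit {P : β → Prop} (hP : ∀ w, P (f w) ↔ P w) {z w : β}
    (hw : w ∈ iterateOrbit f z) : P w ↔ P z := by
  have hiter : ∀ i w, P (f^[i] w) ↔ P w := by
    intro i
    induction i with
    | zero => exact fun _ => Iff.rfl
    | succ i ih => exact fun w => by rw [iterate_succ_apply', hP, ih]
  rcases hw with ⟨i, rfl | rfl⟩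
  exacts [hiter i z, (hiter i w).symm]

end Orbits

section PowerTails

variable {Y : Set (List α)} {y : List α}

def appendPow (y : List α) (p : List α × ℕ) : List α := p.1 ++ (List.replicate p.2 y).flatten

/-- The factorization over `Y` of a product of words `w y^k`. -/
def expandPow (y : List α) (L : List (List α × ℕ)) : List (List α) :=
  L.flatMap fun p => p.1 :: List.replicate p.2 y

theorem flatten_expandPow (y : List α) (L : List (List α × ℕ)) :
    (expandPow y L).flatten = (L.map (appendPow y)).flatten := by
  induction L <;> simp_all [expandPow, appendPow]

theorem replicate_append_inj {k k' : ℕ} {s t : List (List α)} (hs : s.head? ≠ some y)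
    (ht : t.head? ≠ some y) (h : List.replicate k y ++ s = List.replicate k' y ++ t) :
    k = k' ∧ s = t := by
  induction k generalizing k' with
  | zero =>
    cases k' with
    | zero => exact ⟨rfl, h⟩
    | succ k' =>
      rw [List.replicate_zero, List.nil_append] at h
      simp [h, List.replicate_succ] at hs
  | succ k ih =>
    cases k' with
    | zero =>
      rw [List.replicate_zero, List.nil_append] at h
      simp [← h, List.replicate_succ] at ht
    | succ k' =>
      simp only [List.replicate_succ, List.cons_append, List.cons.injEq, true_and] at h
      exact (ih h).imp_left (congrArg _)

theorem expandPow_injective {L L' : List (List α × ℕ)} (hL : ∀ p ∈ L, p.1 ≠ y)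
    (hL' : ∀ p ∈ L', p.1 ≠ y) (h : expandPow y L = expandPow y L') : L = L' := by
  have head_ne : ∀ {L : List (List α × ℕ)}, (∀ p ∈ L, p.1 ≠ y) → (expandPow y L).head? ≠ some y
    | [], _ => by simp [expandPow]
    | p :: _, hL => by simpa [expandPow] using hL p List.mem_cons_self
  induction L generalizing L' with
  | nil => cases L' <;> simp_all [expandPow]
  | cons p L ih =>
    cases L' with
    | nil => simp [expandPow] at h
    | cons q L' =>
      simp only [expandPow, List.flatMap_cons, List.cons_append, List.cons.injEq] at h
      simp only [List.mem_cons, forall_eq_or_imp] at hL hL'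
      obtain ⟨hk, hrest⟩ := replicate_append_inj (head_ne hL.2) (head_ne hL'.2) h.2
      rw [Prod.ext h.1 hk, ih hL.2 hL'.2 hrest]

theorem forall_mem_expandPow (hy : y ∈ Y) {L : List (List α × ℕ)} (hL : ∀ p ∈ L, p.1 ∈ Y) :
    ∀ u ∈ expandPow y L, u ∈ Y := by
  simp only [expandPow, List.mem_flatMap, List.mem_cons]
  rintro u ⟨p, hp, rfl | hu⟩
  exacts [hL p hp, List.eq_of_mem_replicate hu ▸ hy]

theorem exists_expandPow_of_mem_starSet {w : List α}
    (hw : w ∈ StarSet (appendPow y '' {p | p.1 ∈ Y \ {y}})) :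
    ∃ L : List (List α × ℕ), (∀ p ∈ L, p.1 ∈ Y ∧ p.1 ≠ y) ∧ (expandPow y L).flatten = w := by
  obtain ⟨_, hl, rfl⟩ := hw
  obtain ⟨L, hL, rfl⟩ := exists_list_map_eq_of_forall_mem_image hl
  exact ⟨L, hL, flatten_expandPow y L⟩

theorem isCode_image_appendPow (hY : IsCode Y) (hy : y ∈ Y) :
    IsCode (appendPow y '' {p | p.1 ∈ Y \ {y}}) := by
  intro l m hl hm hlm
  obtain ⟨L, hL, rfl⟩ := exists_list_map_eq_of_forall_mem_image hl
  obtain ⟨L', hL', rfl⟩ := exists_list_map_eq_of_forall_mem_image hm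
  rw [← flatten_expandPow, ← flatten_expandPow] at hlm
  have hexp := hY _ _ (forall_mem_expandPow hy fun p hp => (hL p hp).1)
    (forall_mem_expandPow hy fun p hp => (hL' p hp).1) hlm
  rw [expandPow_injective (fun p hp => (hL p hp).2) (fun p hp => (hL' p hp).2) hexp]

theorem not_mem_starSet_image_appendPow (hY : IsCode Y) (hy : y ∈ Y) :
    y ∉ StarSet (appendPow y '' {p | p.1 ∈ Y \ {y}}) := by
  intro hmem
  obtain ⟨L, hL, hflat⟩ := exists_expandPow_of_mem_starSet hmem
  have hexp : expandPow y L = [y] :=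
    hY _ _ (forall_mem_expandPow hy fun p hp => (hL p hp).1) (by simpa using hy)
      (by simpa using hflat)
  cases L with
  | nil => simp [expandPow] at hexp
  | cons p L =>
    simp only [expandPow, List.flatMap_cons, List.cons_append, List.cons.injEq] at hexp
    exact (hL p List.mem_cons_self).2 hexp.1

theorem starSet_image_appendPow_ssubset (hY : IsCode Y) (hy : y ∈ Y) :
    StarSet (appendPow y '' {p | p.1 ∈ Y \ {y}}) ⊂ StarSet Y := by
  refine ⟨fun w hw => ?_, fun hsub => not_mem_starSet_image_appendPow hY hy
    (hsub ⟨[y], by simpa using hy, by simp⟩)⟩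
  obtain ⟨L, hL, rfl⟩ := exists_expandPow_of_mem_starSet hw
  exact ⟨expandPow y L, forall_mem_expandPow hy fun p hp => (hL p hp).1, rfl⟩

end PowerTails

theorem stmt17_general (θ : List α → List α) (hθ : LitAnti θ)
    (Y : Set (List α)) (hcode : IsCode Y)
    (y : List α) (hy : y ∈ Y)
    (Y₀ : Set (List α))
    (hY₀ : Y₀ = {u | ∃ w ∈ Y \ {y}, ∃ k : ℕ, u = w ++ (List.replicate k y).flatten})
    (Fam : Set (Set (List α)))
    (hFam : Fam = {S | ∃ i : ℕ, θ^[i] '' Y₀ = S ∨ θ^[i] '' S = Y₀})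
    (M : Set (List α)) (hM : M = ⋂ S ∈ Fam, StarSet S) :
    IsCode Y₀ ∧ StarSet Y₀ ⊂ StarSet Y ∧ (∀ S ∈ Fam, IsCode S) ∧
      FreeSubmonoid M ∧ θ '' M = M := by
  obtain ⟨hbij, -, hφ⟩ := hθ
  have hY₀' : Y₀ = appendPow y '' {p | p.1 ∈ Y \ {y}} := by
    ext u
    simp [hY₀, appendPow, eq_comm]
  have hFam' : Fam = iterateOrbit (Set.image θ) Y₀ := by
    simp only [hFam, iterateOrbit, Set.image_iterate_eq]
  have hcode₀ : IsCode Y₀ := hY₀' ▸ isCode_image_appendPow hcode hy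
  have hcodes : ∀ S ∈ Fam, IsCode S := fun S hS =>
    (iff_of_mem_iterateOrbit (isCode_image_iff hbij.1 hφ) (hFam' ▸ hS)).2 hcode₀
  have hbij' : Bijective (Set.image θ) :=
    ⟨Set.image_injective.2 hbij.1, Set.image_surjective.2 hbij.2⟩
  refine ⟨hcode₀, hY₀' ▸ starSet_image_appendPow_ssubset hcode hy, hcodes, ?_, ?_⟩
  · rw [hM]
    exact freeSubmonoid_biInter fun S hS =>
      ⟨isSubmonoidSet_starSet S, stable_starSet (hcodes S hS)⟩
  · rw [hM]
    exact image_biInter_starSet hbij hφ (hFam' ▸ image_iterateOrbit hbij' Y₀)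

theorem stmt17 (θ : List α → List α) (hθ : LitAnti θ)
    (Y : Set (List α)) (hYe : [] ∉ Y) (hcode : IsCode Y)
    (y : List α) (hy : y ∈ Y)
    (Y₀ : Set (List α))
    (hY₀ : Y₀ = {u | ∃ w ∈ Y \ {y}, ∃ k : ℕ, u = w ++ (List.replicate k y).flatten})
    (Fam : Set (Set (List α)))
    (hFam : Fam = {S | ∃ i : ℕ, θ^[i] '' Y₀ = S ∨ θ^[i] '' S = Y₀})
    (M : Set (List α)) (hM : M = ⋂ S ∈ Fam, StarSet S) :
    IsCode Y₀ ∧ StarSet Y₀ ⊂ StarSet Y ∧ (∀ S ∈ Fam, IsCode S) ∧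
      FreeSubmonoid M ∧ θ '' M = M :=
  stmt17_general θ hθ Y hcode y hy Y₀ hY₀ Fam hFam M hM
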